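/- arXiv:2305.01598 — 2 statements merged into one kernel-verified Lean document; each statement's English description precedes it below -/
import Mathlib

section
/- The Shannon entropy H(T) = −Σ_i p_i(T) log p_i(T) of the temperature-T softmax distribution over weights x1,…,xV is a non-decreasing function of T > 0. -/
open Finset

/-- Gibbs' inequality for positive distributions. -/
lemma my_gibbs {n : ℕ} (q r : Fin n → ℝ)
    (hq : ∀ i, 0 < q i) (hr : ∀ i, 0 < r i)
    (hq1 : ∑ i, q i = 1) (hr1 : ∑ i, r i = 1) :
    -∑ i, q i * Real.log (q i) ≤ -∑ i, q i * Real.log (r i) := by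
  have h1 : ∀ i : Fin n, q i * Real.log (r i) - q i * Real.log (q i) ≤ r i - q i := by
    intro i
    have hpos := div_pos (hr i) (hq i)
    have h := Real.log_le_sub_one_of_pos hpos
    rw [Real.log_div (hr i).ne' (hq i).ne'] at h
    have h2 := mul_le_mul_of_nonneg_left h (hq i).le
    calc q i * Real.log (r i) - q i * Real.log (q i)
        = q i * (Real.log (r i) - Real.log (q i)) := by ring
      _ ≤ q i * (r i / q i - 1) := h2
      _ = r i - q i := by
          have hne := (hq i).ne'
          field_simp
  have hsum := Finset.sum_le_sum (fun i (_ : i ∈ Finset.univ) => h1 i)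
  rw [Finset.sum_sub_distrib, Finset.sum_sub_distrib, hq1, hr1] at hsum
  linarith

/-- Separable double sum. -/
lemma my_sep {n : ℕ} (x c d : Fin n → ℝ) :
    ∑ i, ∑ j, x i * (c i * d j) = (∑ i, c i * x i) * (∑ j, d j) := by
  rw [Finset.sum_mul]
  refine Finset.sum_congr rfl fun i _ => ?_
  rw [Finset.mul_sum]
  refine Finset.sum_congr rfl fun j _ => by ring

/-- Correlation inequality: ⟨x⟩ is monotone in inverse temperature. -/
lemma my_corr {n : ℕ} (x : Fin n → ℝ) {a b : ℝ} (hab : b ≤ a) :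
    (∑ i, Real.exp (b * x i) * x i) * (∑ j, Real.exp (a * x j)) ≤
      (∑ i, Real.exp (a * x i) * x i) * (∑ j, Real.exp (b * x j)) := by
  set A := fun i => Real.exp (a * x i) with hA
  set B := fun i => Real.exp (b * x i) with hB
  have key : ∀ i j : Fin n, 0 ≤ (x i - x j) * (A i * B j - B i * A j) := by
    intro i j
    rcases le_total (x j) (x i) with h | h
    · apply mul_nonneg (by linarith)
      have h3 : b * x i + a * x j ≤ a * x i + b * x j := by nlinarith
      have h4 := Real.exp_le_exp.mpr h3
      rw [Real.exp_add, Real.exp_add] at h4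
      simp only [hA, hB]
      linarith [h4]
    · rw [show (x i - x j) * (A i * B j - B i * A j)
          = (-(x i - x j)) * (-(A i * B j - B i * A j)) by ring]
      apply mul_nonneg (by linarith)
      have h3 : a * x i + b * x j ≤ b * x i + a * x j := by nlinarith
      have h4 := Real.exp_le_exp.mpr h3
      rw [Real.exp_add, Real.exp_add] at h4
      simp only [hA, hB]
      linarith [h4]
  have hsum : 0 ≤ ∑ i, ∑ j, (x i - x j) * (A i * B j - B i * A j) :=
    Finset.sum_nonneg fun i _ => Finset.sum_nonneg fun j _ => key i j
  have expand : ∑ i, ∑ j, (x i - x j) * (A i * B j - B i * A j)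
      = 2 * ((∑ i, A i * x i) * (∑ j, B j) - (∑ i, B i * x i) * (∑ j, A j)) := by
    have hg : ∀ i j : Fin n, (x i - x j) * (A i * B j - B i * A j)
        = (x i * (A i * B j) - x i * (B i * A j)) + (x j * (A j * B i) - x j * (B j * A i)) := by
      intro i j; ring
    calc ∑ i, ∑ j, (x i - x j) * (A i * B j - B i * A j)
        = ∑ i, ∑ j, ((x i * (A i * B j) - x i * (B i * A j))
            + (x j * (A j * B i) - x j * (B j * A i))) := by
          exact Finset.sum_congr rfl fun i _ => Finset.sum_congr rfl fun j _ => hg i j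
      _ = (∑ i, ∑ j, (x i * (A i * B j) - x i * (B i * A j)))
            + ∑ i, ∑ j, (x j * (A j * B i) - x j * (B j * A i)) := by
          rw [← Finset.sum_add_distrib]
          exact Finset.sum_congr rfl fun i _ => Finset.sum_add_distrib
      _ = (∑ i, ∑ j, (x i * (A i * B j) - x i * (B i * A j)))
            + ∑ i, ∑ j, (x i * (A i * B j) - x i * (B i * A j)) := by
          congr 1
          exact Finset.sum_comm
      _ = 2 * ((∑ i, A i * x i) * (∑ j, B j) - (∑ i, B i * x i) * (∑ j, A j)) := by
          rw [Finset.sum_congr rfl fun i _ => Finset.sum_sub_distrib _ _,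
            Finset.sum_sub_distrib, my_sep, my_sep]
          ring
  have habc : (∑ i, Real.exp (a * x i) * x i) = ∑ i, A i * x i := rfl
  linarith [hsum, expand]

theorem stmt10 (V : ℕ) (hV : 2 ≤ V) (x : Fin V → ℝ) (hne : ∃ i j, x i ≠ x j)
    (p : Fin V → ℝ → ℝ)
    (hp : ∀ i T, p i T = Real.exp (x i / T) / ∑ j, Real.exp (x j / T))
    (H : ℝ → ℝ)
    (hH : ∀ T, H T = -∑ i, p i T * Real.log (p i T)) :
    ∀ T₁ T₂ : ℝ, 0 < T₁ → T₁ ≤ T₂ → H T₁ ≤ H T₂ := by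
  intro T₁ T₂ hT₁ hle
  have hT₂ : 0 < T₂ := lt_of_lt_of_le hT₁ hle
  have hVpos : 0 < V := by omega
  haveI : Nonempty (Fin V) := Fin.pos_iff_nonempty.mp hVpos
  have hS : ∀ T : ℝ, 0 < ∑ j, Real.exp (x j / T) :=
    fun T => Finset.sum_pos (fun j _ => Real.exp_pos _) Finset.univ_nonempty
  have hppos : ∀ i T, 0 < p i T := by
    intro i T; rw [hp]; exact div_pos (Real.exp_pos _) (hS T)
  have hpsum : ∀ T : ℝ, ∑ i, p i T = 1 := by
    intro T
    calc ∑ i, p i T = ∑ i, Real.exp (x i / T) / (∑ j, Real.exp (x j / T)) :=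
          Finset.sum_congr rfl fun i _ => hp i T
      _ = (∑ i, Real.exp (x i / T)) / (∑ j, Real.exp (x j / T)) := by
          rw [Finset.sum_div]
      _ = 1 := div_self (hS T).ne'
  have hlog : ∀ i (T : ℝ), Real.log (p i T) = x i / T - Real.log (∑ j, Real.exp (x j / T)) := by
    intro i T
    rw [hp, Real.log_div (Real.exp_pos _).ne' (hS T).ne', Real.log_exp]
  -- cross entropy formula
  have cross : ∀ T T' : ℝ, -∑ i, p i T * Real.log (p i T')
      = Real.log (∑ j, Real.exp (x j / T')) - (∑ i, p i T * x i) / T' := by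
    intro T T'
    calc -∑ i, p i T * Real.log (p i T')
        = -∑ i, (p i T * (x i / T') - p i T * Real.log (∑ j, Real.exp (x j / T'))) := by
          refine congrArg Neg.neg (Finset.sum_congr rfl fun i _ => ?_)
          rw [hlog]; ring
      _ = -((∑ i, p i T * (x i / T')) - (∑ i, p i T) * Real.log (∑ j, Real.exp (x j / T'))) := by
          rw [Finset.sum_sub_distrib, Finset.sum_mul]
      _ = Real.log (∑ j, Real.exp (x j / T')) - (∑ i, p i T * x i) / T' := by
          rw [hpsum]
          rw [show ∑ i, p i T * (x i / T') = (∑ i, p i T * x i) / T' by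
            rw [Finset.sum_div]
            exact Finset.sum_congr rfl fun i _ => (mul_div_assoc _ _ _).symm]
          ring
  -- Gibbs
  have gibbs := my_gibbs (fun i => p i T₁) (fun i => p i T₂)
    (fun i => hppos i T₁) (fun i => hppos i T₂) (hpsum T₁) (hpsum T₂)
  -- mean monotonicity: ∑ p i T₂ * x i ≤ ∑ p i T₁ * x i
  have hmean : ∑ i, p i T₂ * x i ≤ ∑ i, p i T₁ * x i := by
    have hd : ∀ (T : ℝ), ∑ i, p i T * x i
        = (∑ i, Real.exp ((1/T) * x i) * x i) / (∑ j, Real.exp ((1/T) * x j)) := by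
      intro T
      have hx : ∀ j : Fin V, x j / T = (1/T) * x j := fun j => by
        rw [one_div, div_eq_inv_mul]
      calc ∑ i, p i T * x i
          = ∑ i, (Real.exp ((1/T) * x i) / (∑ j, Real.exp ((1/T) * x j))) * x i := by
            refine Finset.sum_congr rfl fun i _ => ?_
            rw [hp]
            simp only [hx]
        _ = (∑ i, Real.exp ((1/T) * x i) * x i) / (∑ j, Real.exp ((1/T) * x j)) := by
            rw [Finset.sum_div]
            exact Finset.sum_congr rfl fun i _ => by ring
    rw [hd T₁, hd T₂]
    have hS₁ : 0 < ∑ j, Real.exp ((1/T₁) * x j) := by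
      apply Finset.sum_pos (fun j _ => Real.exp_pos _) Finset.univ_nonempty
    have hS₂ : 0 < ∑ j, Real.exp ((1/T₂) * x j) := by
      apply Finset.sum_pos (fun j _ => Real.exp_pos _) Finset.univ_nonempty
    rw [div_le_div_iff₀ hS₂ hS₁]
    exact my_corr x (one_div_le_one_div_of_le hT₁ hle)
  calc H T₁ = -∑ i, p i T₁ * Real.log (p i T₁) := hH T₁
    _ ≤ -∑ i, p i T₁ * Real.log (p i T₂) := gibbs
    _ = Real.log (∑ j, Real.exp (x j / T₂)) - (∑ i, p i T₁ * x i) / T₂ := cross T₁ T₂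
    _ ≤ Real.log (∑ j, Real.exp (x j / T₂)) - (∑ i, p i T₂ * x i) / T₂ := by
        gcongr
    _ = -∑ i, p i T₂ * Real.log (p i T₂) := (cross T₂ T₂).symm
    _ = H T₂ := (hH T₂).symm
end

section
/- If the lists C1,…,Cm partition a set of candidates into equivalence classes, then for every K ≤ m the first K elements of the round-robin interleaving of C1,…,Cm lie in K pairwise distinct equivalence classes. -/
/-- Round-robin interleaving: take the first element of each class in order,
then the second element of each class that has one, and so on. -/
def roundRobin {α : Type*} (Cs : List (List α)) : List α :=
  (List.range ((Cs.map List.length).foldr max 0)).flatMap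
    (fun j => Cs.filterMap (fun C => C[j]?))

lemma filterMap_zero_eq_pmap {α : Type*} :
    ∀ (Cs : List (List α)) (h : ∀ C ∈ Cs, C ≠ []),
      Cs.filterMap (fun C => C[0]?) = Cs.pmap (fun C h => C.head h) h := by
  intro Cs
  induction Cs with
  | nil => intro h; simp
  | cons C Cs ih =>
    intro h
    have hC : C ≠ [] := h C List.mem_cons_self
    have : C[0]? = some (C.head hC) := by
      rw [← List.head?_eq_getElem?, List.head?_eq_head]
    simp only [List.filterMap_cons, this, List.pmap]
    rw [ih]

/-- If the lists `Cs` are the equivalence classes of a partition (labeled injectively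
by `q` via `f`), then for every `K ≤ m` the first `K` elements of the round-robin
interleaving lie in `K` pairwise distinct equivalence classes. -/
theorem stmt15 {α ι : Type*} (Cs : List (List α)) (hne : ∀ C ∈ Cs, C ≠ [])
    (q : α → ι) (f : Fin Cs.length → ι)
    (hq : ∀ (i : Fin Cs.length), ∀ a ∈ Cs.get i, q a = f i)
    (hf : Function.Injective f)
    (K : ℕ) (hK : K ≤ Cs.length) :
    ((roundRobin Cs).take K).length = K
    ∧ ((roundRobin Cs).take K).Pairwise (fun a b => q a ≠ q b) := by
  rcases Nat.eq_zero_or_pos K with hK0 | hKpos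
  · subst hK0; simp
  -- the first block of the round robin
  set L1 : List α := Cs.filterMap (fun C => C[0]?) with hL1
  have hL1p : L1 = Cs.pmap (fun C h => C.head h) hne := filterMap_zero_eq_pmap Cs hne
  have hL1len : L1.length = Cs.length := by rw [hL1p]; simp
  -- the max length is positive
  have hCs : Cs ≠ [] := by
    intro h; subst h; simp at hK; omega
  obtain ⟨C0, Cs', rfl⟩ := List.exists_cons_of_ne_nil hCs
  have hMpos : 0 < ((C0 :: Cs').map List.length).foldr max 0 := by
    have : C0.length ≤ ((C0 :: Cs').map List.length).foldr max 0 := by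
      simp [List.foldr_cons]
    have hC0 : C0 ≠ [] := hne C0 List.mem_cons_self
    have : 0 < C0.length := List.length_pos_iff.mpr hC0
    omega
  obtain ⟨M, hM⟩ := Nat.exists_eq_add_of_lt hMpos
  -- decompose the round robin
  have hrr : roundRobin (C0 :: Cs') = L1 ++
      ((List.range M).flatMap (fun j => (C0 :: Cs').filterMap (fun C => C[j+1]?))) := by
    rw [roundRobin, hM]
    rw [Nat.zero_add, List.range_succ_eq_map]
    simp [List.flatMap_cons, List.flatMap_map]
    exact hL1.symm
  have htake : (roundRobin (C0 :: Cs')).take K = L1.take K := by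
    rw [hrr, List.take_append_of_le_length (by omega)]
  -- the map of L1 under q is ofFn f
  have hmap : L1.map q = List.ofFn f := by
    apply List.ext_getElem
    · simp [hL1len]
    · intro i h1 h2
      simp only [List.getElem_map, List.getElem_ofFn, hL1p, List.getElem_pmap]
      exact hq ⟨i, by simpa [hL1len] using h1⟩ _ (List.head_mem _)
  have hnodup : (L1.map q).Nodup := by
    rw [hmap]; exact List.nodup_ofFn.mpr hf
  have hpw : L1.Pairwise (fun a b => q a ≠ q b) := by
    rw [List.Nodup, List.pairwise_map] at hnodup
    exact hnodup
  constructor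
  · rw [htake, List.length_take, hL1len]; omega
  · rw [htake]
    exact hpw.sublist (List.take_sublist _ _)
end
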